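/- For all n ≥ 1, k ≥ 0 and 1 ≤ ℓ ≤ n, the number of k-Rvalid vectors of size n having exactly ℓ nonempty entries equals the (1,ℓ) entry of the k-th power of the matrix S_n. -/

import Mathlib

open Finset

/-- `Π·h`: the vector whose `q`-th entry is the union of the `Π p` over all `p` with `h p = q`. -/
def dotAct {n : ℕ} (Pi : Fin n → Finset ℕ) (h : Fin n → Fin n) : Fin n → Finset ℕ :=
  fun q => (Finset.univ.filter (fun p => h p = q)).biUnion Pi

/-- Entrywise union of two vectors of sets. -/
def vUnion {n : ℕ} (Pi Pi' : Fin n → Finset ℕ) : Fin n → Finset ℕ :=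
  fun q => Pi q ∪ Pi' q

/-- `r = max (π₀ ∪ … ∪ π_{n−1})`. -/
def vMax {n : ℕ} (Pi : Fin n → Finset ℕ) : ℕ :=
  (Finset.univ.sup Pi).sup id

/-- `Π↑`: add `r = max (π₀ ∪ … ∪ π_{n−1})` to every element of every entry. -/
def vUp {n : ℕ} (Pi : Fin n → Finset ℕ) : Fin n → Finset ℕ :=
  fun q => (Pi q).image (· + vMax Pi)

/-- A `k`-EXPcomposition of size `n`: pairwise disjoint entries whose union is `{1,…,2^k}`. -/
def IsEXP {n : ℕ} (k : ℕ) (Pi : Fin n → Finset ℕ) : Prop :=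
  (∀ p q : Fin n, p ≠ q → Disjoint (Pi p) (Pi q)) ∧
    Finset.univ.sup Pi = Finset.Icc 1 (2 ^ k)

/-- A `k`-Rvalid vector of size `n`. -/
def IsRvalid {n : ℕ} (k : ℕ) (ρ : Fin n → Finset ℕ) : Prop :=
  IsEXP k ρ ∧ (∀ p : Fin n, p.val = 0 → 1 ∈ ρ p) ∧
    ∀ k' < k, ∀ i ∈ Finset.Icc 1 (2 ^ k'), ∀ j ∈ Finset.Icc 1 (2 ^ k'),
      (∃ α, i ∈ ρ α ∧ j ∈ ρ α) → ∃ β, i + 2 ^ k' ∈ ρ β ∧ j + 2 ^ k' ∈ ρ β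

/-- A `k`-Lvalid vector of size `m`. -/
def IsLvalid {m : ℕ} (k : ℕ) (lam : Fin m → Finset ℕ) : Prop :=
  IsEXP k lam ∧ (∀ p : Fin m, p.val = 0 → 2 ^ k ∈ lam p) ∧
    ∀ k' < k, ∀ i ∈ Finset.Icc 1 (2 ^ k'), ∀ j ∈ Finset.Icc 1 (2 ^ k'),
      (∃ α, 2 ^ k + 1 - i ∈ lam α ∧ 2 ^ k + 1 - j ∈ lam α) →
        ∃ β, 2 ^ k + 1 - (i + 2 ^ k') ∈ lam β ∧ 2 ^ k + 1 - (j + 2 ^ k') ∈ lam β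

/-- Number of nonempty entries of a vector of sets. -/
def nne {n : ℕ} (Pi : Fin n → Finset ℕ) : ℕ :=
  (Finset.univ.filter (fun q => Pi q ≠ ∅)).card

/-- `succ(P) = {P ∪ (P·g)↑ : g}`. -/
def succSet {n : ℕ} (P : Fin n → Finset ℕ) : Finset (Fin n → Finset ℕ) :=
  (Finset.univ : Finset (Fin n → Fin n)).image (fun g => vUnion P (vUp (dotAct P g)))

/-- The graded set `U_{m,n}^{(k)}` of U-pairs. -/
def Uset (m n : ℕ) : ℕ → Set ((Fin m → Finset ℕ) × (Fin n → Finset ℕ))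
  | 0 => {x | x = (fun p => if p.val = 0 then {1} else ∅,
                   fun q => if q.val = 0 then {1} else ∅)}
  | k + 1 => {x | ∃ L P, (L, P) ∈ Uset m n k ∧ ∃ (f : Fin m → Fin m) (g : Fin n → Fin n),
      x = (vUnion (dotAct L f) (vUp L), vUnion P (vUp (dotAct P g)))}

/-- The `r`-Stirling number: partitions of `{1,…,a}` into `b` nonempty blocks
with `1,…,r` in pairwise distinct blocks. -/
noncomputable def rStirling (a b r : ℕ) : ℕ :=
  Set.ncard {C : Finset (Finset ℕ) |
    C.card = b ∧ (∅ ∉ C) ∧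
    (∀ B ∈ C, ∀ B' ∈ C, B ≠ B' → Disjoint B B') ∧
    C.sup id = Finset.Icc 1 a ∧
    ∀ x ∈ Finset.Icc 1 r, ∀ y ∈ Finset.Icc 1 r, x ≠ y →
      ∀ B ∈ C, x ∈ B → y ∉ B}

/-- The Stirling number of the second kind: the number of partitions of an
`a`-element set into `b` nonempty blocks. -/
noncomputable def stirling2 (a b : ℕ) : ℕ := rStirling a b 0

/-- The entry `s_n^{(i,j)}` (with `1 ≤ i,j ≤ n`). -/
noncomputable def sEntry (n i j : ℕ) : ℕ :=
  if i ≤ j then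
    (j - i).factorial * Nat.choose (n - i) (j - i) *
      ∑ α ∈ Finset.Icc (j - i) i, Nat.choose i α * i ^ (i - α) * stirling2 α (j - i)
  else 0

/-- The matrix `S_n`, with rows and columns indexed by `{1,…,n}`. -/
noncomputable def Smat (n : ℕ) : Matrix (Fin n) (Fin n) ℕ :=
  fun i j => sEntry n (i.val + 1) (j.val + 1)

/-- One step of the shuffle-automaton action on subsets of the grid. -/
def stepE {m n : ℕ} (E : Finset (Fin m × Fin n)) (f : Fin m → Fin m) (g : Fin n → Fin n) :
    Finset (Fin m × Fin n) :=
  E.image (fun p => (f p.1, p.2)) ∪ E.image (fun p => (p.1, g p.2))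

/-- Reachability from `{(0,0)}` by finitely many steps. -/
def Reach {m n : ℕ} (hm : 0 < m) (hn : 0 < n) (E : Finset (Fin m × Fin n)) : Prop :=
  Relation.ReflTransGen (fun E1 E2 => ∃ f g, E2 = stepE E1 f g)
    {(⟨0, hm⟩, ⟨0, hn⟩)} E

/-- Reachability from `{(0,0)}` in at most `t` steps. -/
def ReachIn {m n : ℕ} (hm : 0 < m) (hn : 0 < n) :
    ℕ → Finset (Fin m × Fin n) → Prop
  | 0, E => E = {(⟨0, hm⟩, ⟨0, hn⟩)}
  | t + 1, E => ReachIn hm hn t E ∨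
      ∃ E' f g, ReachIn hm hn t E' ∧ E = stepE E' f g

/-- `s(Λ,P) = {(i,j) : λ_i ∩ ρ_j ≠ ∅}`. -/
def sTab {m n : ℕ} (L : Fin m → Finset ℕ) (P : Fin n → Finset ℕ) :
    Finset (Fin m × Fin n) :=
  Finset.univ.filter (fun p => (L p.1 ∩ P p.2).Nonempty)

/-!
A `(k+1)`-Rvalid vector `ρ` restricts on `{1, …, 2^k}` to a `k`-Rvalid vector `P`, and the
validity condition at level `k` says that the shifted copies `x + 2^k` of the elements of a block
of `P` again lie in one block. Hence `ρ = P ∪ (P·g)↑` for a map `g`, unique on the nonempty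
entries of `P`, and conversely every such vector is `(k+1)`-Rvalid. If `P` has `i` nonempty
entries `A`, its successors with `j` nonempty entries correspond to maps `h : A → Fin n` with
`|A ∪ h(A)| = j`; sorting them by the new entries `B = h(A) \ A` (`C(n-i, j-i)` choices), the
preimage `T = h⁻¹(B)` of size `α` (`C(i, α)` choices), a surjection `T → B`
(`(j-i)! S(α, j-i)` choices) and a map `A \ T → A` (`i^(i-α)` choices) gives `s_n^(i,j)`. So the
vector of counts by number of nonempty entries is multiplied by `S_n` at each step, starting
from the first unit vector.
-/

open Function
open scoped Nat

lemma image_univ_subtype {α β : Type*} [DecidableEq β] (A : Finset α) (f : α → β) :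
    univ.image (fun a : A => f a) = A.image f := by
  ext
  simp

lemma mem_univ_sup {ι α : Type*} [Fintype ι] [DecidableEq α] {P : ι → Finset α} {x : α} :
    x ∈ univ.sup P ↔ ∃ q, x ∈ P q := by
  simp [mem_sup]

section SetPartitions

variable {α β : Type*} [DecidableEq α] [DecidableEq β]

def IsSetPartition (s : Finset α) (b : ℕ) (C : Finset (Finset α)) : Prop :=
  #C = b ∧ ∅ ∉ C ∧ (∀ B ∈ C, ∀ B' ∈ C, B ≠ B' → Disjoint B B') ∧ C.sup id = s

instance (s : Finset α) (b : ℕ) : DecidablePred (IsSetPartition s b) := fun _ => by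
  unfold IsSetPartition; infer_instance

def setPartitions (s : Finset α) (b : ℕ) : Finset (Finset (Finset α)) :=
  s.powerset.powerset.filter (IsSetPartition s b)

lemma IsSetPartition.subset_of_mem {s : Finset α} {b : ℕ} {C : Finset (Finset α)}
    (hC : IsSetPartition s b C) {B : Finset α} (hB : B ∈ C) : B ⊆ s :=
  hC.2.2.2 ▸ le_sup (f := id) hB

lemma mem_setPartitions {s : Finset α} {b : ℕ} {C : Finset (Finset α)} :
    C ∈ setPartitions s b ↔ IsSetPartition s b C := by
  simp only [setPartitions, mem_filter, mem_powerset, and_iff_right_iff_imp]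
  exact fun hC B hB => mem_powerset.mpr (hC.subset_of_mem hB)

lemma stirling2_eq_card_setPartitions (a b : ℕ) :
    stirling2 a b = #(setPartitions (Icc 1 a) b) := by
  rw [stirling2, rStirling, ← Set.ncard_coe_finset]
  congr 1
  ext C
  simp [mem_setPartitions, IsSetPartition]

lemma IsSetPartition.card_le {s : Finset α} {b : ℕ} {C : Finset (Finset α)}
    (hC : IsSetPartition s b C) : b ≤ #s := by
  obtain ⟨rfl, hempty, hdisj, rfl⟩ := hC
  rw [sup_eq_biUnion, card_biUnion (t := id) hdisj]
  refine card_eq_sum_ones C ▸ sum_le_sum fun B hB => ?_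
  exact card_pos.mpr (nonempty_iff_ne_empty.mpr fun h => hempty (h ▸ hB))

lemma stirling2_eq_zero_of_lt {a b : ℕ} (h : a < b) : stirling2 a b = 0 := by
  rw [stirling2_eq_card_setPartitions, Finset.card_eq_zero, eq_empty_iff_forall_notMem]
  intro C hC
  have := (mem_setPartitions.mp hC).card_le
  simp only [Nat.card_Icc] at this
  omega

lemma sup_image_image (f : α → β) (C : Finset (Finset α)) :
    (C.image (image f)).sup id = (C.sup id).image f := by
  simp only [sup_eq_biUnion, image_biUnion, biUnion_image, id]

lemma isSetPartition_image_iff {f : α → β} (hf : Injective f) {s : Finset α} {b : ℕ}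
    {C : Finset (Finset α)} :
    IsSetPartition (s.image f) b (C.image (image f)) ↔ IsSetPartition s b C := by
  have himg : Injective (image f) := image_injective hf
  simp only [IsSetPartition, forall_mem_image]
  simp only [card_image_of_injective _ himg, himg.ne_iff, disjoint_image hf, sup_image_image,
    (image_injective hf).eq_iff, mem_image, image_eq_empty, exists_eq_right]

lemma card_setPartitions_image {f : α → β} (hf : Injective f) (s : Finset α) (b : ℕ) :
    #(setPartitions (s.image f) b) = #(setPartitions s b) := by
  rw [← card_image_of_injective _ (image_injective (image_injective hf))]
  congr 1
  ext D
  simp only [mem_image, mem_setPartitions]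
  constructor
  · intro hD
    have hsub : D ⊆ s.powerset.image (image f) := fun B hB => by
      obtain ⟨B', hB', rfl⟩ := subset_image_iff.mp (hD.subset_of_mem hB)
      exact mem_image_of_mem _ (mem_powerset.mpr hB')
    obtain ⟨C, -, rfl⟩ := subset_image_iff.mp hsub
    exact ⟨C, (isSetPartition_image_iff hf).mp hD, rfl⟩
  · rintro ⟨C, hC, rfl⟩
    exact (isSetPartition_image_iff hf).mpr hC

lemma card_setPartitions_univ (γ : Type*) [Fintype γ] [DecidableEq γ] (b : ℕ) :
    #(setPartitions (univ : Finset γ) b) = stirling2 (Fintype.card γ) b := by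
  let f : γ → ℕ := fun x => Fintype.equivFin γ x + 1
  have hf : Injective f := fun x y h =>
    (Fintype.equivFin γ).injective (Fin.ext (by simpa [f] using h))
  have hrange : univ.image f = Icc 1 (Fintype.card γ) := by
    ext m
    simp only [mem_image, mem_univ, true_and, mem_Icc, f]
    constructor
    · rintro ⟨x, rfl⟩
      exact ⟨by omega, (Fintype.equivFin γ x).isLt⟩
    · rintro ⟨h1, h2⟩
      exact ⟨(Fintype.equivFin γ).symm ⟨m - 1, by omega⟩, by simp; omega⟩
  rw [stirling2_eq_card_setPartitions, ← hrange, card_setPartitions_image hf]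

end SetPartitions

section Surjections

variable {α β : Type*} [Fintype α] [DecidableEq α]

def blockwise {B : Finset β} (P : Finpartition (univ : Finset α)) (e : P.parts ≃ B) : α → β :=
  fun x => e ⟨P.part x, P.part_mem.mpr (mem_univ x)⟩

variable {B : Finset β} (P : Finpartition (univ : Finset α))

lemma blockwise_eq_of_mem (e : P.parts ≃ B) {c : P.parts} {x : α} (hx : x ∈ c.1) :
    blockwise P e x = e c := by
  have : (⟨P.part x, P.part_mem.mpr (mem_univ x)⟩ : P.parts) = c :=
    Subtype.ext (P.part_eq_of_mem c.2 hx)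
  rw [blockwise, this]

lemma blockwise_injective : Injective (blockwise (B := B) P) := fun e e' h => Equiv.ext fun c => by
  obtain ⟨x, hx⟩ := P.nonempty_of_mem_parts c.2
  exact Subtype.ext (blockwise_eq_of_mem P e hx ▸ blockwise_eq_of_mem P e' hx ▸ congrFun h x)

variable [DecidableEq β]

def fibers (f : α → β) : Finset (Finset α) :=
  (univ.image f).image fun d => univ.filter (f · = d)

lemma mem_fibers {f : α → β} {c : Finset α} : c ∈ fibers f ↔ ∃ x, univ.filter (f · = f x) = c := by
  simp [fibers]

lemma isSetPartition_fibers (f : α → β) : IsSetPartition univ #(univ.image f) (fibers f) := by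
  refine ⟨card_image_of_injOn ?_, ?_, ?_, ?_⟩
  · simp only [coe_image, coe_univ, Set.image_univ, Set.InjOn, Set.mem_range]
    rintro _ ⟨x, rfl⟩ _ ⟨x', rfl⟩ h
    simpa using (Finset.ext_iff.mp h x).mp (by simp)
  · simp only [mem_fibers, not_exists]
    exact fun x h => by simpa using (Finset.ext_iff.mp h x).mp (by simp)
  · simp only [mem_fibers]
    rintro _ ⟨x, rfl⟩ _ ⟨x', rfl⟩ hne
    refine disjoint_filter.mpr fun y _ hy hy' => hne ?_
    rw [← hy, hy']
  · refine eq_univ_of_forall fun x => mem_sup.mpr ⟨_, mem_fibers.mpr ⟨x, rfl⟩, by simp⟩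

lemma image_blockwise (e : P.parts ≃ B) : univ.image (blockwise P e) = B := by
  ext d
  simp only [mem_image, mem_univ, true_and]
  refine ⟨fun ⟨x, hx⟩ => hx ▸ (e _).2, fun hd => ?_⟩
  obtain ⟨x, hx⟩ := P.nonempty_of_mem_parts (e.symm ⟨d, hd⟩).2
  exact ⟨x, by simp [blockwise_eq_of_mem P e hx]⟩

lemma fibers_blockwise (e : P.parts ≃ B) : fibers (blockwise P e) = P.parts := by
  have hfiber (x : α) : univ.filter (blockwise P e · = blockwise P e x) = P.part x := by
    ext y
    simp only [mem_filter, mem_univ, true_and, blockwise, Subtype.coe_inj, e.injective.eq_iff,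
      Subtype.mk.injEq]
    exact (P.mem_part_iff_part_eq_part (mem_univ y) (mem_univ x)).symm
  ext c
  simp only [mem_fibers, hfiber]
  refine ⟨fun ⟨x, hx⟩ => hx ▸ P.part_mem.mpr (mem_univ x), fun hc => ?_⟩
  obtain ⟨x, hx⟩ := P.nonempty_of_mem_parts hc
  exact ⟨x, P.part_eq_of_mem hc hx⟩

lemma exists_blockwise_eq (hcard : #P.parts = #B) {f : α → β} (himage : univ.image f = B)
    (hfibers : fibers f = P.parts) : ∃ e : P.parts ≃ B, blockwise P e = f := by
  have hval (c : P.parts) : ∃ d : B, c.1 = univ.filter (f · = d) := by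
    obtain ⟨x, hx⟩ := mem_fibers.mp (hfibers.symm ▸ c.2 : c.1 ∈ fibers f)
    exact ⟨⟨f x, himage ▸ mem_image_of_mem f (mem_univ x)⟩, hx.symm⟩
  choose value hvalue using hval
  have hinj : Injective value := fun c c' h =>
    Subtype.ext ((hvalue c).trans (h ▸ (hvalue c').symm))
  refine ⟨Equiv.ofBijective value ((Fintype.bijective_iff_injective_and_card value).mpr
    ⟨hinj, by simpa using hcard⟩), funext fun x => ?_⟩
  have hx : x ∈ (⟨P.part x, P.part_mem.mpr (mem_univ x)⟩ : P.parts).1 :=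
    P.mem_part_self.mpr (mem_univ x)
  rw [hvalue] at hx
  exact ((mem_filter.mp hx).2).symm

variable [Fintype β]

lemma card_filter_image_eq_and_fibers_eq (hcard : #P.parts = #B) :
    #{f : α → β | univ.image f = B ∧ fibers f = P.parts} = (#B)! := by
  have hcard' : Fintype.card P.parts = Fintype.card B := by simpa using hcard
  rw [← Fintype.card_coe B, ← hcard', ← Fintype.card_equiv (Fintype.equivOfCardEq hcard'),
    ← card_univ, ← card_image_of_injective _ (blockwise_injective P)]
  congr 1
  ext f
  simp only [mem_filter, mem_univ, true_and, mem_image]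
  refine ⟨fun ⟨himage, hfibers⟩ => exists_blockwise_eq P hcard himage hfibers, ?_⟩
  rintro ⟨e, rfl⟩
  exact ⟨image_blockwise P e, fibers_blockwise P e⟩

theorem card_filter_image_eq (B : Finset β) :
    #{f : α → β | univ.image f = B} = (#B)! * stirling2 (Fintype.card α) #B := by
  rw [card_eq_sum_card_fiberwise (f := fibers) (t := setPartitions univ #B) fun f hf => by
    rw [mem_coe, mem_filter] at hf
    exact mem_setPartitions.mpr (hf.2 ▸ isSetPartition_fibers f)]
  rw [← card_setPartitions_univ, mul_comm, ← smul_eq_mul, ← sum_const]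
  refine sum_congr rfl fun C hC => ?_
  obtain ⟨hcard, hempty, hdisj, hsup⟩ := mem_setPartitions.mp hC
  rw [filter_filter]
  exact card_filter_image_eq_and_fibers_eq
    ⟨C, supIndep_iff_pairwiseDisjoint.mpr hdisj, hsup, hempty⟩ hcard

end Surjections

section ImageCounting

variable {α β : Type*} [Fintype α] [DecidableEq α] [Fintype β] [DecidableEq β]

lemma card_filter_image_sdiff_eq_and_preimage_eq {A B : Finset β} (hAB : Disjoint A B)
    (T : Finset α) :
    #{h : α → β | univ.image h \ A = B ∧ univ.filter (h · ∈ B) = T}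
      = #{f : T → β | univ.image f = B} * #A ^ (Fintype.card α - #T) := by
  have hpow : #(Fintype.piFinset fun _ : {x // x ∉ T} => A) = #A ^ (Fintype.card α - #T) := by
    simp [Fintype.card_subtype_compl]
  rw [← hpow, ← card_product]
  -- `h` is admissible iff its restriction to `T` maps onto `B` and its restriction to `Tᶜ` maps
  -- into `A`.
  refine card_equiv (Equiv.piEquivPiSubtypeProd (· ∈ T) fun _ => β) fun h => ?_
  simp only [mem_filter, mem_univ, true_and, mem_product, Fintype.mem_piFinset,
    Equiv.piEquivPiSubtypeProd, Equiv.coe_fn_mk, Finset.ext_iff, mem_sdiff, mem_image,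
    Subtype.exists, Subtype.forall]
  have := disjoint_left.mp hAB
  grind

lemma card_filter_image_sdiff_eq {A B : Finset β} (hAB : Disjoint A B) :
    #{h : α → β | univ.image h \ A = B}
      = ∑ t ∈ range (Fintype.card α + 1),
          (Fintype.card α).choose t * ((#B)! * stirling2 t #B * #A ^ (Fintype.card α - t)) := by
  rw [card_eq_sum_card_fiberwise (f := fun h => univ.filter (h · ∈ B)) (t := univ.powerset)
    fun _ _ => by simp]
  trans ∑ T ∈ (univ : Finset α).powerset, (#B)! * stirling2 #T #B * #A ^ (Fintype.card α - #T)
  · refine sum_congr rfl fun T _ => ?_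
    rw [filter_filter, card_filter_image_sdiff_eq_and_preimage_eq hAB, card_filter_image_eq,
      Fintype.card_coe]
  · rw [sum_powerset_apply_card fun t => (#B)! * stirling2 t #B * #A ^ (Fintype.card α - t),
      card_univ]
    simp only [smul_eq_mul]

theorem card_filter_card_union_image_eq (A : Finset β) (hα : Fintype.card α = #A) (j : ℕ) :
    #{h : α → β | #(A ∪ univ.image h) = j} = sEntry (Fintype.card β) #A j := by
  rw [sEntry]
  split_ifs with hij
  · have hcond (h : α → β) : #(A ∪ univ.image h) = j ↔ #(univ.image h \ A) = j - #A := by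
      have := card_sdiff_add_card (univ.image h) A
      rw [union_comm] at this
      omega
    simp only [hcond]
    rw [card_eq_sum_card_fiberwise (f := fun h => univ.image h \ A)
      (t := powersetCard (j - #A) Aᶜ) fun h hh => by
        rw [mem_coe, mem_filter] at hh
        exact mem_powersetCard.mpr ⟨fun x hx => mem_compl.mpr (mem_sdiff.mp hx).2, hh.2⟩]
    have hfiber : ∀ B ∈ powersetCard (j - #A) Aᶜ,
        #{h ∈ {h : α → β | #(univ.image h \ A) = j - #A} | univ.image h \ A = B}
          = ∑ t ∈ range (#A + 1),
              (#A).choose t * ((j - #A)! * stirling2 t (j - #A) * #A ^ (#A - t)) := by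
      intro B hB
      rw [mem_powersetCard] at hB
      rw [filter_filter, filter_congr fun h _ => and_iff_right_of_imp fun hh => hh ▸ hB.2,
        card_filter_image_sdiff_eq (disjoint_right.mpr fun _ hx => mem_compl.mp (hB.1 hx)),
        hB.2, hα]
    rw [sum_congr rfl hfiber, sum_const, card_powersetCard, card_compl, smul_eq_mul]
    rw [← sum_subset (s₁ := Icc (j - #A) #A) (fun t ht => by simp at ht ⊢; omega)
      fun t ht ht' => by
        simp only [mem_range, mem_Icc, not_and_or, not_le] at ht ht'
        rw [stirling2_eq_zero_of_lt (by omega)]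
        simp]
    simp only [mul_sum]
    exact sum_congr rfl fun t _ => by ring
  · rw [Finset.card_eq_zero, filter_eq_empty_iff]
    intro h _ hh
    have := card_le_card (subset_union_left (s₁ := A) (s₂ := univ.image h))
    omega

end ImageCounting

section Doubling

variable {n k : ℕ}

def succVec (P : Fin n → Finset ℕ) (g : Fin n → Fin n) : Fin n → Finset ℕ :=
  vUnion P (vUp (dotAct P g))

def lowerHalf (k : ℕ) (ρ : Fin n → Finset ℕ) : Fin n → Finset ℕ :=
  fun q => ρ q ∩ Icc 1 (2 ^ k)

lemma succSet_eq_image (P : Fin n → Finset ℕ) : succSet P = univ.image (succVec P) := rfl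

def nonemptyEntries (P : Fin n → Finset ℕ) : Finset (Fin n) := {q | P q ≠ ∅}

lemma nne_eq_card_nonemptyEntries (P : Fin n → Finset ℕ) : nne P = #(nonemptyEntries P) := rfl

lemma mem_nonemptyEntries {P : Fin n → Finset ℕ} {q : Fin n} :
    q ∈ nonemptyEntries P ↔ (P q).Nonempty := by
  simp [nonemptyEntries, nonempty_iff_ne_empty]

lemma mem_dotAct {P : Fin n → Finset ℕ} {g : Fin n → Fin n} {q : Fin n} {x : ℕ} :
    x ∈ dotAct P g q ↔ ∃ p, g p = q ∧ x ∈ P p := by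
  simp [dotAct]

lemma vMax_eq_of_sup_eq {P : Fin n → Finset ℕ} (hsup : univ.sup P = Icc 1 (2 ^ k)) :
    vMax P = 2 ^ k := by
  rw [vMax, hsup]
  exact le_antisymm (Finset.sup_le fun x hx => (mem_Icc.mp hx).2)
    (le_sup (f := id) (mem_Icc.mpr ⟨Nat.one_le_two_pow, le_rfl⟩))

lemma sup_dotAct (P : Fin n → Finset ℕ) (g : Fin n → Fin n) :
    univ.sup (dotAct P g) = univ.sup P := by
  ext x
  simp only [mem_univ_sup, mem_dotAct]
  exact ⟨fun ⟨_, p, _, hp⟩ => ⟨p, hp⟩, fun ⟨p, hp⟩ => ⟨g p, p, rfl, hp⟩⟩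

lemma mem_Icc_of_sup_eq {P : Fin n → Finset ℕ} (hsup : univ.sup P = Icc 1 (2 ^ k)) {q : Fin n}
    {x : ℕ} (hx : x ∈ P q) : 1 ≤ x ∧ x ≤ 2 ^ k :=
  mem_Icc.mp (hsup ▸ mem_univ_sup.mpr ⟨q, hx⟩)

lemma mem_succVec {P : Fin n → Finset ℕ} (hsup : univ.sup P = Icc 1 (2 ^ k))
    {g : Fin n → Fin n} {q : Fin n} {z : ℕ} :
    z ∈ succVec P g q ↔ z ∈ P q ∨ ∃ p, g p = q ∧ ∃ y ∈ P p, y + 2 ^ k = z := by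
  have hmax : vMax (dotAct P g) = 2 ^ k := vMax_eq_of_sup_eq (sup_dotAct P g ▸ hsup)
  simp only [succVec, vUnion, vUp, hmax, mem_union, mem_image, mem_dotAct]
  grind

lemma isEXP_succVec {P : Fin n → Finset ℕ} (hP : IsEXP k P) (g : Fin n → Fin n) :
    IsEXP (k + 1) (succVec P g) := by
  obtain ⟨hdisj, hsup⟩ := hP
  have hbound {q : Fin n} {x : ℕ} (hx : x ∈ P q) := mem_Icc_of_sup_eq hsup hx
  refine ⟨fun p q hpq => disjoint_left.mpr fun z hzp hzq => ?_, ?_⟩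
  · rcases (mem_succVec hsup).mp hzp with hz | ⟨p', rfl, y, hy, rfl⟩ <;>
      rcases (mem_succVec hsup).mp hzq with hz' | ⟨q', rfl, y', hy', hyy'⟩
    · exact disjoint_left.mp (hdisj p q hpq) hz hz'
    · have := hbound hz; have := hbound hy'; omega
    · have := hbound hz'; have := hbound hy; omega
    · obtain rfl : y = y' := by omega
      obtain rfl : p' = q' := by
        by_contra hne
        exact disjoint_left.mp (hdisj p' q' hne) hy hy'
      exact hpq rfl
  · ext z
    simp only [mem_univ_sup, mem_succVec hsup, mem_Icc, pow_succ]
    constructor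
    · rintro ⟨q, hz | ⟨p, -, y, hy, rfl⟩⟩
      · have := hbound hz; omega
      · have := hbound hy; omega
    · rintro ⟨h1, h2⟩
      by_cases hz : z ≤ 2 ^ k
      · obtain ⟨q, hq⟩ := mem_univ_sup.mp (hsup ▸ mem_Icc.mpr ⟨h1, hz⟩ : z ∈ univ.sup P)
        exact ⟨q, Or.inl hq⟩
      · obtain ⟨p, hp⟩ := mem_univ_sup.mp
          (hsup ▸ mem_Icc.mpr ⟨by omega, by omega⟩ : z - 2 ^ k ∈ univ.sup P)
        exact ⟨g p, Or.inr ⟨p, rfl, _, hp, by omega⟩⟩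

lemma isRvalid_succVec {P : Fin n → Finset ℕ} (hP : IsRvalid k P) (g : Fin n → Fin n) :
    IsRvalid (k + 1) (succVec P g) := by
  obtain ⟨hexp, hone, hcond⟩ := hP
  have hsup := hexp.2
  refine ⟨isEXP_succVec hexp g, fun p hp => (mem_succVec hsup).mpr (Or.inl (hone p hp)), ?_⟩
  rintro k' hk' i hi j hj ⟨α, hiα, hjα⟩
  rw [mem_Icc] at hi hj
  have h2k : 2 ^ k' ≤ 2 ^ k := Nat.pow_le_pow_right (by norm_num) (by omega)
  have hlow {x : ℕ} (hx : x ∈ succVec P g α) (hxk : x ≤ 2 ^ k) : x ∈ P α := by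
    rcases (mem_succVec hsup).mp hx with h | ⟨p, -, y, hy, rfl⟩
    · exact h
    · have := mem_Icc_of_sup_eq hsup hy; omega
  have hiP := hlow hiα (by omega)
  have hjP := hlow hjα (by omega)
  obtain rfl | hk'k := eq_or_lt_of_le (Nat.le_of_lt_succ hk')
  · exact ⟨g α, (mem_succVec hsup).mpr (Or.inr ⟨α, rfl, i, hiP, rfl⟩),
      (mem_succVec hsup).mpr (Or.inr ⟨α, rfl, j, hjP, rfl⟩)⟩
  · obtain ⟨β, hiβ, hjβ⟩ := hcond k' hk'k i (mem_Icc.mpr hi) j (mem_Icc.mpr hj) ⟨α, hiP, hjP⟩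
    exact ⟨β, (mem_succVec hsup).mpr (Or.inl hiβ), (mem_succVec hsup).mpr (Or.inl hjβ)⟩

lemma lowerHalf_succVec {P : Fin n → Finset ℕ} (hsup : univ.sup P = Icc 1 (2 ^ k))
    (g : Fin n → Fin n) : lowerHalf k (succVec P g) = P := by
  funext q
  ext x
  simp only [lowerHalf, mem_inter, mem_succVec hsup, mem_Icc]
  constructor
  · rintro ⟨hx | ⟨p, -, y, hy, rfl⟩, -, hxk⟩
    · exact hx
    · have := mem_Icc_of_sup_eq hsup hy; omega
  · exact fun hx => ⟨Or.inl hx, mem_Icc_of_sup_eq hsup hx⟩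

lemma isRvalid_lowerHalf {ρ : Fin n → Finset ℕ} (hρ : IsRvalid (k + 1) ρ) :
    IsRvalid k (lowerHalf k ρ) := by
  obtain ⟨⟨hdisj, hsup⟩, hone, hcond⟩ := hρ
  have hmem {q : Fin n} {x : ℕ} : x ∈ lowerHalf k ρ q ↔ x ∈ ρ q ∧ 1 ≤ x ∧ x ≤ 2 ^ k := by
    rw [lowerHalf, mem_inter, mem_Icc]
  have h2k : 2 ^ k ≤ 2 ^ (k + 1) := Nat.pow_le_pow_right (by norm_num) (by omega)
  refine ⟨⟨fun p q hpq => disjoint_of_subset_left inter_subset_left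
      (disjoint_of_subset_right inter_subset_left (hdisj p q hpq)), ?_⟩,
    fun p hp => hmem.mpr ⟨hone p hp, le_rfl, Nat.one_le_two_pow⟩, ?_⟩
  · ext x
    rw [mem_univ_sup, mem_Icc]
    refine ⟨fun ⟨q, hq⟩ => (hmem.mp hq).2, fun ⟨h1, h2⟩ => ?_⟩
    obtain ⟨q, hq⟩ := mem_univ_sup.mp (hsup ▸ mem_Icc.mpr ⟨h1, h2.trans h2k⟩ : x ∈ univ.sup ρ)
    exact ⟨q, hmem.mpr ⟨hq, h1, h2⟩⟩
  · rintro k' hk' i hi j hj ⟨α, hiα, hjα⟩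
    rw [mem_Icc] at hi hj
    have : 2 ^ (k' + 1) ≤ 2 ^ k := Nat.pow_le_pow_right (by norm_num) hk'
    rw [pow_succ] at this
    obtain ⟨β, hiβ, hjβ⟩ := hcond k' (by omega) i (mem_Icc.mpr hi) j (mem_Icc.mpr hj)
      ⟨α, (hmem.mp hiα).1, (hmem.mp hjα).1⟩
    exact ⟨β, hmem.mpr ⟨hiβ, by omega, by omega⟩, hmem.mpr ⟨hjβ, by omega, by omega⟩⟩

lemma exists_forall_mem_lowerHalf_add_mem {ρ : Fin n → Finset ℕ} (hρ : IsRvalid (k + 1) ρ)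
    (q : Fin n) : ∃ β, ∀ y ∈ lowerHalf k ρ q, y + 2 ^ k ∈ ρ β := by
  obtain ⟨⟨hdisj, hsup⟩, -, hcond⟩ := hρ
  rcases (lowerHalf k ρ q).eq_empty_or_nonempty with hempty | ⟨x, hx⟩
  · exact ⟨q, by simp [hempty]⟩
  simp only [lowerHalf, mem_inter] at hx ⊢
  obtain ⟨β, hβ⟩ := mem_univ_sup.mp
    (hsup ▸ by grind [pow_succ] : x + 2 ^ k ∈ univ.sup ρ)
  refine ⟨β, fun y ⟨hy, hyI⟩ => ?_⟩
  obtain ⟨β', hyβ', hxβ'⟩ := hcond k (by omega) y hyI x hx.2 ⟨q, hy, hx.1⟩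
  obtain rfl : β' = β := by
    by_contra hne
    exact disjoint_left.mp (hdisj β' β hne) hxβ' hβ
  exact hyβ'

lemma IsRvalid.exists_eq_succVec {ρ : Fin n → Finset ℕ} (hρ : IsRvalid (k + 1) ρ) :
    ∃ g, ρ = succVec (lowerHalf k ρ) g := by
  choose g hg using exists_forall_mem_lowerHalf_add_mem hρ
  have hsup := (isRvalid_lowerHalf hρ).1.2
  obtain ⟨⟨hdisj, hsupρ⟩, -, -⟩ := hρ
  refine ⟨g, funext fun q => ext fun z => ⟨fun hz => ?_, fun hz => ?_⟩⟩
  · have hzI := mem_Icc.mp (hsupρ ▸ mem_univ_sup.mpr ⟨q, hz⟩)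
    rw [mem_succVec hsup]
    by_cases hzk : z ≤ 2 ^ k
    · exact Or.inl (mem_inter.mpr ⟨hz, mem_Icc.mpr ⟨hzI.1, hzk⟩⟩)
    obtain ⟨p, hp⟩ := mem_univ_sup.mp
      (hsup ▸ mem_Icc.mpr ⟨by omega, by rw [pow_succ] at hzI; omega⟩ : z - 2 ^ k ∈ univ.sup _)
    have hzp : z ∈ ρ (g p) := Nat.sub_add_cancel (by omega : 2 ^ k ≤ z) ▸ hg p _ hp
    obtain rfl : g p = q := by
      by_contra hne
      exact disjoint_left.mp (hdisj _ _ hne) hzp hz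
    exact Or.inr ⟨p, rfl, _, hp, by omega⟩
  · rcases (mem_succVec hsup).mp hz with h | ⟨p, rfl, y, hy, rfl⟩
    · exact (mem_inter.mp h).1
    · exact hg p y hy

lemma succVec_eq_succVec_iff {P : Fin n → Finset ℕ} (hP : IsEXP k P) {g g' : Fin n → Fin n} :
    succVec P g = succVec P g' ↔ ∀ p ∈ nonemptyEntries P, g p = g' p := by
  constructor
  · intro h p hp
    obtain ⟨x, hx⟩ := mem_nonemptyEntries.mp hp
    have hg : x + 2 ^ k ∈ succVec P g' (g p) :=
      h ▸ (mem_succVec hP.2).mpr (Or.inr ⟨p, rfl, x, hx, rfl⟩)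
    have hg' : x + 2 ^ k ∈ succVec P g' (g' p) :=
      (mem_succVec hP.2).mpr (Or.inr ⟨p, rfl, x, hx, rfl⟩)
    by_contra hne
    exact disjoint_left.mp ((isEXP_succVec hP g').1 _ _ hne) hg hg'
  · intro h
    have : dotAct P g = dotAct P g' := funext fun q => ext fun x => by
      simp only [mem_dotAct]
      constructor <;> rintro ⟨p, rfl, hx⟩ <;>
        refine ⟨p, ?_, hx⟩ <;> grind [mem_nonemptyEntries.mpr ⟨x, hx⟩]
    rw [succVec, this, succVec]

lemma nne_succVec {P : Fin n → Finset ℕ} (hsup : univ.sup P = Icc 1 (2 ^ k))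
    (g : Fin n → Fin n) :
    nne (succVec P g) = #(nonemptyEntries P ∪ (nonemptyEntries P).image g) := by
  rw [nne_eq_card_nonemptyEntries]
  congr 1
  ext q
  simp only [mem_nonemptyEntries, mem_union, mem_image]
  constructor
  · rintro ⟨z, hz⟩
    rcases (mem_succVec hsup).mp hz with h | ⟨p, rfl, y, hy, -⟩
    · exact Or.inl ⟨z, h⟩
    · exact Or.inr ⟨p, ⟨y, hy⟩, rfl⟩
  · rintro (⟨x, hx⟩ | ⟨p, ⟨x, hx⟩, rfl⟩)
    · exact ⟨x, (mem_succVec hsup).mpr (Or.inl hx)⟩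
    · exact ⟨x + 2 ^ k, (mem_succVec hsup).mpr (Or.inr ⟨p, rfl, x, hx, rfl⟩)⟩

end Doubling

section Counting

variable {n k : ℕ}

lemma card_filter_succSet {P : Fin n → Finset ℕ} (hP : IsEXP k P) (j : ℕ) :
    #{ρ ∈ succSet P | nne ρ = j} = sEntry n (nne P) j := by
  set A := nonemptyEntries P
  -- `succVec P g` only depends on `g` restricted to `A`, so successors correspond to maps
  -- `A → Fin n`.
  let extend (h : A → Fin n) (p : Fin n) : Fin n := if hp : p ∈ A then h ⟨p, hp⟩ else p
  have himage (h : A → Fin n) : A.image (extend h) = univ.image h := by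
    rw [← image_univ_subtype]
    simp [extend]
  have := card_filter_card_union_image_eq (β := Fin n) A (Fintype.card_coe A) j
  rw [Fintype.card_fin] at this
  rw [nne_eq_card_nonemptyEntries, ← this, succSet_eq_image]
  symm
  refine card_bij (fun h _ => succVec P (extend h)) (fun h hh => ?_) (fun h _ h' _ heq => ?_)
    fun ρ hρ => ?_
  · simp only [mem_filter, mem_univ, true_and] at hh
    exact mem_filter.mpr ⟨mem_image_of_mem _ (mem_univ _), by rw [nne_succVec hP.2, himage, hh]⟩
  · funext a
    simpa [extend] using (succVec_eq_succVec_iff hP).mp heq a a.2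
  · obtain ⟨hsucc, hρj⟩ := mem_filter.mp hρ
    obtain ⟨g, -, rfl⟩ := mem_image.mp hsucc
    have hg : succVec P (extend fun a => g a) = succVec P g :=
      (succVec_eq_succVec_iff hP).mpr fun p hp => by simp [extend, show p ∈ A from hp]
    refine ⟨fun a => g a, ?_, hg⟩
    rw [mem_filter, ← hρj, nne_succVec hP.2, image_univ_subtype]
    exact ⟨mem_univ _, rfl⟩

instance : DecidablePred (IsRvalid (n := n) k) := fun ρ => by
  unfold IsRvalid IsEXP; infer_instance

def rvalidVecs (n k : ℕ) : Finset (Fin n → Finset ℕ) :=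
  (Fintype.piFinset fun _ => (Icc 1 (2 ^ k)).powerset).filter (IsRvalid k)

lemma mem_rvalidVecs {ρ : Fin n → Finset ℕ} : ρ ∈ rvalidVecs n k ↔ IsRvalid k ρ := by
  refine mem_filter.trans (and_iff_right_of_imp fun hρ => Fintype.mem_piFinset.mpr fun q => ?_)
  exact mem_powerset.mpr (hρ.1.2 ▸ le_sup (f := ρ) (mem_univ q))

lemma card_filter_rvalidVecs_succ (j : ℕ) :
    #{ρ ∈ rvalidVecs n (k + 1) | nne ρ = j} = ∑ P ∈ rvalidVecs n k, sEntry n (nne P) j := by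
  have hunion : {ρ ∈ rvalidVecs n (k + 1) | nne ρ = j}
      = (rvalidVecs n k).biUnion fun P => {ρ ∈ succSet P | nne ρ = j} := by
    ext ρ
    simp only [mem_filter, mem_biUnion, mem_rvalidVecs, succSet_eq_image, mem_image, mem_univ,
      true_and]
    constructor
    · rintro ⟨hρ, rfl⟩
      obtain ⟨g, hg⟩ := hρ.exists_eq_succVec
      exact ⟨_, isRvalid_lowerHalf hρ, ⟨g, hg.symm⟩, rfl⟩
    · rintro ⟨P, hP, ⟨g, rfl⟩, rfl⟩
      exact ⟨isRvalid_succVec hP g, rfl⟩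
  rw [hunion, card_biUnion]
  · exact sum_congr rfl fun P hP => card_filter_succSet (mem_rvalidVecs.mp hP).1 j
  · intro P hP P' hP' hne
    refine disjoint_left.mpr fun ρ hρ hρ' => hne ?_
    simp only [mem_coe, mem_rvalidVecs, mem_filter, succSet_eq_image, mem_image, mem_univ,
      true_and] at hP hP' hρ hρ'
    obtain ⟨⟨g, rfl⟩, -⟩ := hρ
    obtain ⟨⟨g', hg'⟩, -⟩ := hρ'
    rw [← lowerHalf_succVec hP.1.2 g, ← hg', lowerHalf_succVec hP'.1.2 g']

def baseVec (n : ℕ) : Fin n → Finset ℕ := fun q => if q.val = 0 then {1} else ∅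

lemma rvalidVecs_zero (hn : 0 < n) : rvalidVecs n 0 = {baseVec n} := by
  ext ρ
  rw [mem_rvalidVecs, mem_singleton]
  constructor
  · rintro ⟨⟨hdisj, hsup⟩, hone, -⟩
    have hone0 : 1 ∈ ρ ⟨0, hn⟩ := hone _ rfl
    funext q
    ext x
    simp only [baseVec]
    constructor
    · intro hx
      obtain rfl : x = 1 := by simpa [hsup] using mem_univ_sup.mpr ⟨q, hx⟩
      obtain rfl : q = ⟨0, hn⟩ := by
        by_contra hne
        exact disjoint_left.mp (hdisj _ _ hne) hx hone0
      simp
    · split_ifs with hq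
      · obtain rfl : q = ⟨0, hn⟩ := Fin.ext hq
        simpa using fun h => h ▸ hone0
      · simp
  · rintro rfl
    refine ⟨⟨fun p q hpq => ?_, ?_⟩, fun p hp => by simp [baseVec, hp], by simp⟩
    · simp only [baseVec]
      split_ifs with hp hq <;> simp_all [Fin.ext_iff]
    · ext x
      simp only [mem_univ_sup, baseVec]
      constructor
      · rintro ⟨q, hq⟩
        split_ifs at hq <;> simp_all
      · intro hx
        exact ⟨⟨0, hn⟩, by simpa using hx⟩

lemma nne_baseVec (hn : 0 < n) : nne (baseVec n) = 1 := by
  rw [nne_eq_card_nonemptyEntries, card_eq_one]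
  refine ⟨⟨0, hn⟩, ext fun q => ?_⟩
  simp only [mem_nonemptyEntries, baseVec, mem_singleton, Fin.ext_iff]
  split_ifs <;> simp_all

lemma IsRvalid.nne_pos {ρ : Fin n → Finset ℕ} (hρ : IsRvalid k ρ) (hn : 0 < n) : 0 < nne ρ :=
  card_pos.mpr ⟨⟨0, hn⟩, mem_nonemptyEntries.mpr ⟨1, hρ.2.1 _ rfl⟩⟩

lemma nne_le (ρ : Fin n → Finset ℕ) : nne ρ ≤ n :=
  (card_filter_le _ _).trans (card_fin n).le

lemma sum_card_filter_nne_mul (hn : 0 < n) (f : ℕ → ℕ) :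
    ∑ q : Fin n, #{ρ ∈ rvalidVecs n k | nne ρ = q + 1} * f (q + 1)
      = ∑ ρ ∈ rvalidVecs n k, f (nne ρ) := by
  let index (ρ : Fin n → Finset ℕ) : Fin n := ⟨nne ρ - 1, by have := nne_le ρ; omega⟩
  rw [← sum_fiberwise_of_maps_to (g := index) (t := univ) fun _ _ => mem_univ _]
  refine sum_congr rfl fun q _ => ?_
  have hfiber : {ρ ∈ rvalidVecs n k | nne ρ = q + 1} = {ρ ∈ rvalidVecs n k | index ρ = q} :=
    filter_congr fun ρ hρ => by
      have := (mem_rvalidVecs.mp hρ).nne_pos hn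
      simp only [index, Fin.ext_iff]
      omega
  rw [← smul_eq_mul, ← sum_const, hfiber]
  refine sum_congr rfl fun ρ hρ => ?_
  rw [← hfiber, mem_filter] at hρ
  rw [hρ.2]

theorem smat_pow_apply (hn : 0 < n) (k : ℕ) (q : Fin n) :
    (Smat n ^ k) ⟨0, hn⟩ q = #{ρ ∈ rvalidVecs n k | nne ρ = q + 1} := by
  induction k generalizing q with
  | zero =>
    rw [pow_zero, Matrix.one_apply, rvalidVecs_zero hn, filter_singleton, nne_baseVec hn]
    by_cases hq : q.val = 0 <;> simp [hq, Fin.ext_iff, eq_comm]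
  | succ k ih =>
    simp only [pow_succ, Matrix.mul_apply, ih, card_filter_rvalidVecs_succ]
    exact sum_card_filter_nne_mul hn fun i => sEntry n i (q + 1)

end Counting

theorem stmt12 (n k ℓ : ℕ) (hn : 1 ≤ n) (hℓ1 : 1 ≤ ℓ) (hℓn : ℓ ≤ n) :
    {ρ : Fin n → Finset ℕ | IsRvalid k ρ ∧ nne ρ = ℓ}.ncard =
      (Smat n ^ k) ⟨0, by omega⟩ ⟨ℓ - 1, by omega⟩ := by
  have hset : {ρ : Fin n → Finset ℕ | IsRvalid k ρ ∧ nne ρ = ℓ}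
      = ↑({ρ ∈ rvalidVecs n k | nne ρ = ℓ}) := by
    ext ρ
    simp [mem_rvalidVecs]
  rw [hset, Set.ncard_coe_finset, smat_pow_apply hn, Nat.sub_add_cancel hℓ1]
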